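/- Let i ≥ 4. If the Jaconian set of J_{i−1}(1) is a singleton, say 𝕁(J_{i−1}(1)) = {k}, then k + f(k) < i and (k+1) + f(k+1) > i. -/

import Mathlib

/-- The Jaco out-degree function `f`: `f 0 = 0` and, for `n ≥ 1`,
`f n = n - #{k : 1 ≤ k < n ∧ k + f k ≥ n}` (the out-degree of `v_n` in `J_∞(1)`). -/
def jacoF : ℕ → ℕ
  | 0 => 0
  | n + 1 =>
    (n + 1) - ((Finset.range (n + 1)).attach.filter
      (fun a => 1 ≤ a.1 ∧ n + 1 ≤ a.1 + jacoF a.1)).card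
  decreasing_by all_goals exact Finset.mem_range.mp a.2

/-- The in-degree `d⁻(j) = #{i : 1 ≤ i < j ∧ j ≤ i + f i}` of `v_j` in `J_∞(1)`. -/
def jacoDin (j : ℕ) : ℕ := ((Finset.Ico 1 j).filter (fun i => j ≤ i + jacoF i)).card

/-- The degree `d_n(j) = d⁻(j) + #{k : j < k ≤ n ∧ k ≤ j + f j}` of `v_j` in the
underlying undirected graph of the finite Jaco graph `J_n(1)`. -/
def jacoDeg (n j : ℕ) : ℕ :=
  jacoDin j + ((Finset.Ioc j n).filter (fun k => k ≤ j + jacoF j)).card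

/-- The maximum degree `Δ(J_n(1)) = max_{1 ≤ j ≤ n} d_n(j)`. -/
def jacoDelta (n : ℕ) : ℕ := (Finset.Icc 1 n).sup (jacoDeg n)

/-- The Jaconian set `𝕁(J_n(1)) = {j : 1 ≤ j ≤ n ∧ d_n(j) = Δ(J_n(1))}`. -/
def jacoJ (n : ℕ) : Finset ℕ := (Finset.Icc 1 n).filter (fun j => jacoDeg n j = jacoDelta n)

/-!
Write `r j = j + f j` for the last vertex reached by the out-arcs of `v_j`; since `f` is
monotone (the in-degree grows by at most one per step and `f j + d⁻ j = j`), so is `r`.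
A vertex `v_j` of `J_n(1)` with `r j ≤ n` has degree `d⁻ j + f j = j`, and one with `r j > n`
has degree `n - f j`. Let `m` be the largest `j ≤ n` with `r j ≤ n`. Every `j > m` has
`f j ≥ f (m + 1) ≥ n - m`, hence degree at most `m`, so `Δ(J_n(1)) = m` and `m` is Jaconian.
If the Jaconian set is `{k}`, then `k = m`, so `r k ≤ n`, and `r (k + 1) > n + 1` because
`r (k + 1) = n + 1` would make `k + 1` Jaconian as well.
-/

lemma jacoDin_le_pred (j : ℕ) : jacoDin j ≤ j - 1 := by
  simpa [jacoDin, Nat.card_Ico] using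
    Finset.card_filter_le (Finset.Ico 1 j) (fun i => j ≤ i + jacoF i)

lemma jacoF_succ (n : ℕ) : jacoF (n + 1) = (n + 1) - jacoDin (n + 1) := by
  rw [jacoF, jacoDin,
    Finset.filter_attach (fun x => 1 ≤ x ∧ n + 1 ≤ x + jacoF x) (Finset.range (n + 1)),
    Finset.card_map, Finset.card_attach]
  congr 2
  ext a
  simp only [Finset.mem_filter, Finset.mem_range, Finset.mem_Ico]
  tauto

lemma jacoF_add_jacoDin {n : ℕ} (hn : 1 ≤ n) : jacoF n + jacoDin n = n := by
  obtain ⟨m, rfl⟩ : ∃ m, n = m + 1 := ⟨n - 1, by omega⟩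
  have := jacoDin_le_pred (m + 1)
  rw [jacoF_succ]
  omega

lemma jacoF_pos {n : ℕ} (hn : 1 ≤ n) : 0 < jacoF n := by
  have := jacoDin_le_pred n
  have := jacoF_add_jacoDin hn
  omega

lemma jacoF_one : jacoF 1 = 1 := by
  simpa [jacoDin] using jacoF_add_jacoDin le_rfl

lemma jacoDin_succ_le (n : ℕ) : jacoDin (n + 1) ≤ jacoDin n + 1 := by
  rw [jacoDin, jacoDin]
  calc ((Finset.Ico 1 (n + 1)).filter (fun i => n + 1 ≤ i + jacoF i)).card
      ≤ (insert n ((Finset.Ico 1 n).filter (fun i => n ≤ i + jacoF i))).card := by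
        apply Finset.card_le_card
        intro a ha
        simp only [Finset.mem_filter, Finset.mem_Ico, Finset.mem_insert] at ha ⊢
        omega
    _ ≤ _ := Finset.card_insert_le _ _

lemma jacoF_mono : Monotone jacoF := by
  refine monotone_nat_of_le_succ fun n => ?_
  rcases Nat.eq_zero_or_pos n with rfl | hn
  · simp [jacoF]
  · have := jacoF_add_jacoDin hn
    have := jacoF_add_jacoDin (Nat.le_add_right_of_le hn : 1 ≤ n + 1)
    have := jacoDin_succ_le n
    omega

lemma monotone_add_jacoF : Monotone fun j => j + jacoF j :=
  monotone_id.add jacoF_mono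

lemma jacoDeg_eq (n j : ℕ) : jacoDeg n j = jacoDin j + (min n (j + jacoF j) - j) := by
  have hfilter : (Finset.Ioc j n).filter (fun k => k ≤ j + jacoF j) =
      Finset.Ioc j (min n (j + jacoF j)) := by
    ext x
    simp only [Finset.mem_filter, Finset.mem_Ioc, le_min_iff]
    omega
  rw [jacoDeg, hfilter, Nat.card_Ioc]

lemma jacoDeg_of_add_jacoF_le {n j : ℕ} (hj : 1 ≤ j) (h : j + jacoF j ≤ n) :
    jacoDeg n j = j := by
  have := jacoF_add_jacoDin hj
  rw [jacoDeg_eq, min_eq_right h]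
  omega

lemma jacoDeg_add_jacoF_of_lt {n j : ℕ} (hj : 1 ≤ j) (hjn : j ≤ n) (h : n < j + jacoF j) :
    jacoDeg n j + jacoF j = n := by
  have := jacoF_add_jacoDin hj
  rw [jacoDeg_eq, min_eq_left h.le]
  omega

lemma jacoDeg_le_jacoDelta {n j : ℕ} (hj : 1 ≤ j) (hjn : j ≤ n) :
    jacoDeg n j ≤ jacoDelta n :=
  Finset.le_sup (Finset.mem_Icc.mpr ⟨hj, hjn⟩)

lemma mem_jacoJ_of_jacoDelta_le {n j : ℕ} (hj : 1 ≤ j) (hjn : j ≤ n)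
    (h : jacoDelta n ≤ jacoDeg n j) : j ∈ jacoJ n :=
  Finset.mem_filter.mpr
    ⟨Finset.mem_Icc.mpr ⟨hj, hjn⟩, h.antisymm' (jacoDeg_le_jacoDelta hj hjn)⟩

/-- The last vertex `v_m` of `J_n(1)` all of whose out-arcs in `J_∞(1)` stay inside `J_n(1)`. -/
def jacoLast (n : ℕ) : ℕ := Nat.findGreatest (fun j => j + jacoF j ≤ n) n

lemma jacoLast_add_jacoF_le (n : ℕ) : jacoLast n + jacoF (jacoLast n) ≤ n :=
  Nat.findGreatest_spec (P := fun j => j + jacoF j ≤ n) (Nat.zero_le n) (by simp [jacoF])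

lemma lt_add_jacoF_of_jacoLast_lt {n j : ℕ} (h : jacoLast n < j) (hjn : j ≤ n) :
    n < j + jacoF j :=
  not_le.mp (Nat.findGreatest_is_greatest (P := fun j => j + jacoF j ≤ n) h hjn)

lemma one_le_jacoLast {n : ℕ} (hn : 2 ≤ n) : 1 ≤ jacoLast n :=
  Nat.le_findGreatest (by omega) (by rw [jacoF_one]; omega)

lemma jacoLast_lt {n : ℕ} (hn : 2 ≤ n) : jacoLast n < n := by
  have := jacoLast_add_jacoF_le n
  have := jacoF_pos (one_le_jacoLast hn)
  omega

lemma jacoDeg_le_jacoLast {n j : ℕ} (hj : 1 ≤ j) (hjn : j ≤ n) :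
    jacoDeg n j ≤ jacoLast n := by
  by_cases hjm : j ≤ jacoLast n
  · have hreach : j + jacoF j ≤ n := (monotone_add_jacoF hjm).trans (jacoLast_add_jacoF_le n)
    rw [jacoDeg_of_add_jacoF_le hj hreach]
    exact hjm
  · push Not at hjm
    have hdeg := jacoDeg_add_jacoF_of_lt hj hjn (lt_add_jacoF_of_jacoLast_lt hjm hjn)
    have hnext := lt_add_jacoF_of_jacoLast_lt (Nat.lt_add_one (jacoLast n)) (by omega)
    have hf : jacoF (jacoLast n + 1) ≤ jacoF j := jacoF_mono hjm
    omega

lemma jacoDeg_jacoLast {n : ℕ} (hn : 2 ≤ n) : jacoDeg n (jacoLast n) = jacoLast n :=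
  jacoDeg_of_add_jacoF_le (one_le_jacoLast hn) (jacoLast_add_jacoF_le n)

lemma jacoDelta_eq_jacoLast {n : ℕ} (hn : 2 ≤ n) : jacoDelta n = jacoLast n := by
  refine le_antisymm (Finset.sup_le fun j hj => ?_) ?_
  · obtain ⟨hj1, hjn⟩ := Finset.mem_Icc.mp hj
    exact jacoDeg_le_jacoLast hj1 hjn
  · rw [← jacoDeg_jacoLast hn]
    exact jacoDeg_le_jacoDelta (one_le_jacoLast hn) (jacoLast_lt hn).le

lemma jacoLast_mem_jacoJ {n : ℕ} (hn : 2 ≤ n) : jacoLast n ∈ jacoJ n :=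
  mem_jacoJ_of_jacoDelta_le (one_le_jacoLast hn) (jacoLast_lt hn).le
    (by rw [jacoDelta_eq_jacoLast hn, jacoDeg_jacoLast hn])

lemma jacoLast_succ_mem_jacoJ {n : ℕ} (hn : 2 ≤ n)
    (h : jacoLast n + 1 + jacoF (jacoLast n + 1) = n + 1) : jacoLast n + 1 ∈ jacoJ n := by
  have hlt := jacoLast_lt hn
  have hdeg := jacoDeg_add_jacoF_of_lt (Nat.le_add_left 1 _) hlt (by omega)
  exact mem_jacoJ_of_jacoDelta_le (Nat.le_add_left 1 _) hlt
    (by rw [jacoDelta_eq_jacoLast hn]; omega)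

/-- If the Jaconian set of `J_{i-1}(1)` is a singleton `{k}`, then `k + f k < i` and
`(k+1) + f (k+1) > i`. -/
theorem stmt_3 (i k : ℕ) (hi : 4 ≤ i) (h : jacoJ (i - 1) = {k}) :
    k + jacoF k < i ∧ (k + 1) + jacoF (k + 1) > i := by
  have hn : 2 ≤ i - 1 := by omega
  obtain rfl : jacoLast (i - 1) = k := Finset.mem_singleton.mp (h ▸ jacoLast_mem_jacoJ hn)
  have hreach := jacoLast_add_jacoF_le (i - 1)
  have hnext := lt_add_jacoF_of_jacoLast_lt (Nat.lt_add_one _) (jacoLast_lt hn)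
  have hne : jacoLast (i - 1) + 1 + jacoF (jacoLast (i - 1) + 1) ≠ i - 1 + 1 := fun heq => by
    have hmem := jacoLast_succ_mem_jacoJ hn heq
    simp [h] at hmem
  omega
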